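/- Let G: [0, ∞) → [0, ∞) be injective, let μ be a probability measure on ℝ^d (the law of W), let φ₁, φ₂: ℝ^d → ℝ be μ-integrable with ∫ φ₁ dμ = ∫ φ₂ dμ = 0, and let Λ₁, Λ₂: [a, b] → [0, ∞) with Λ₁(t₀) > 0 for some t₀ ∈ [a, b]. If for every t ∈ [a, b] and μ-almost every w ∈ ℝ^d one has G(Λ₁(t) exp(φ₁(w))) = G(Λ₂(t) exp(φ₂(w))), then φ₁ = φ₂ μ-almost everywhere and Λ₁(t) = Λ₂(t) for all t ∈ [a, b]. -/

import Mathlib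

open MeasureTheory Set

/-! Injectivity of `G` reduces the hypothesis to `Λ₁(t) e^{φ₁} = Λ₂(t) e^{φ₂}` a.e. At `t₀`,
taking logarithms shows that `φ₁ - φ₂` is a.e. the constant `log (Λ₂ t₀ / Λ₁ t₀)`; integrating,
the mean-zero normalization forces this constant to vanish. Once `φ₁ = φ₂` a.e., the factor
`e^{φ}` cancels at any single point `w`, giving `Λ₁ = Λ₂`. -/

lemma Real.log_div_eq_sub_of_mul_exp_eq {c₁ c₂ x y : ℝ} (hc₁ : c₁ ≠ 0)
    (h : c₁ * Real.exp x = c₂ * Real.exp y) : Real.log (c₂ / c₁) = x - y := by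
  have hdiv : c₂ / c₁ = Real.exp (x - y) := by
    rw [Real.exp_sub, div_eq_div_iff hc₁ (Real.exp_pos y).ne', ← h, mul_comm]
  rw [hdiv, Real.log_exp]

lemma MeasureTheory.integral_eq_integral_add_const_of_ae_eq {α : Type*} [MeasurableSpace α]
    {μ : Measure α} [IsProbabilityMeasure μ] {f g : α → ℝ} {c : ℝ} (hg : Integrable g μ)
    (hfg : f =ᵐ[μ] fun w => g w + c) : ∫ w, f w ∂μ = ∫ w, g w ∂μ + c := by
  rw [integral_congr_ae hfg, integral_add hg (integrable_const c), integral_const,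
    probReal_univ, one_smul]

lemma MeasureTheory.eq_of_ae_mul_exp_eq {α : Type*} [MeasurableSpace α] {μ : Measure α}
    [NeZero μ] {f g : α → ℝ} {c₁ c₂ : ℝ}
    (h : ∀ᵐ w ∂μ, c₁ * Real.exp (f w) = c₂ * Real.exp (g w)) (hfg : f =ᵐ[μ] g) : c₁ = c₂ := by
  obtain ⟨w, hw, hfgw⟩ := (h.and hfg).exists
  rw [hfgw] at hw
  exact mul_right_cancel₀ (Real.exp_pos _).ne' hw

theorem identifiability_of_phi_and_Lambda_general
    {d : ℕ} (μ : Measure (Fin d → ℝ)) [IsProbabilityMeasure μ]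
    (G : ℝ → ℝ) (hGinj : Set.InjOn G (Ici 0))
    (φ₁ φ₂ : (Fin d → ℝ) → ℝ)
    (hφ₂int : Integrable φ₂ μ)
    (hφ₁mean : ∫ w, φ₁ w ∂μ = 0) (hφ₂mean : ∫ w, φ₂ w ∂μ = 0)
    (a b : ℝ) (Λ₁ Λ₂ : ℝ → ℝ)
    (hΛ₁ : ∀ t ∈ Icc a b, 0 ≤ Λ₁ t) (hΛ₂ : ∀ t ∈ Icc a b, 0 ≤ Λ₂ t)
    (ht₀ : ∃ t₀ ∈ Icc a b, 0 < Λ₁ t₀)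
    (heq : ∀ t ∈ Icc a b, ∀ᵐ w ∂μ,
      G (Λ₁ t * Real.exp (φ₁ w)) = G (Λ₂ t * Real.exp (φ₂ w))) :
    φ₁ =ᵐ[μ] φ₂ ∧ ∀ t ∈ Icc a b, Λ₁ t = Λ₂ t := by
  have hmul : ∀ t ∈ Icc a b, ∀ᵐ w ∂μ, Λ₁ t * Real.exp (φ₁ w) = Λ₂ t * Real.exp (φ₂ w) :=
    fun t ht => (heq t ht).mono fun w hw =>
      hGinj (mul_nonneg (hΛ₁ t ht) (Real.exp_pos _).le)
        (mul_nonneg (hΛ₂ t ht) (Real.exp_pos _).le) hw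
  obtain ⟨t₀, ht₀, hΛ₁pos⟩ := ht₀
  have hshift : φ₁ =ᵐ[μ] fun w => φ₂ w + Real.log (Λ₂ t₀ / Λ₁ t₀) :=
    (hmul t₀ ht₀).mono fun w hw => by
      rw [Real.log_div_eq_sub_of_mul_exp_eq hΛ₁pos.ne' hw]
      ring
  have hc : Real.log (Λ₂ t₀ / Λ₁ t₀) = 0 := by
    have := integral_eq_integral_add_const_of_ae_eq hφ₂int hshift
    linarith
  have hφ : φ₁ =ᵐ[μ] φ₂ := hshift.trans (.of_forall fun w => by simp [hc])
  exact ⟨hφ, fun t ht => eq_of_ae_mul_exp_eq (hmul t ht) hφ⟩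

/-- Identifiability of `(Λ, φ)` under the normalization `E{φ(W)} = 0`: if `G` is
injective on `[0,∞)`, `φ₁, φ₂` are `μ`-integrable with mean zero, `Λ₁, Λ₂ : [a,b] → [0,∞)`
with `Λ₁(t₀) > 0` for some `t₀ ∈ [a,b]`, and for every `t ∈ [a,b]` one has
`G(Λ₁(t)e^{φ₁(w)}) = G(Λ₂(t)e^{φ₂(w)})` for `μ`-a.e. `w`, then `φ₁ = φ₂` `μ`-a.e. and
`Λ₁ = Λ₂` on `[a,b]`. -/
theorem identifiability_of_phi_and_Lambda
    {d : ℕ} (μ : Measure (Fin d → ℝ)) [IsProbabilityMeasure μ]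
    (G : ℝ → ℝ) (hGinj : Set.InjOn G (Ici 0))
    (φ₁ φ₂ : (Fin d → ℝ) → ℝ)
    (hφ₁int : Integrable φ₁ μ) (hφ₂int : Integrable φ₂ μ)
    (hφ₁mean : ∫ w, φ₁ w ∂μ = 0) (hφ₂mean : ∫ w, φ₂ w ∂μ = 0)
    (a b : ℝ) (Λ₁ Λ₂ : ℝ → ℝ)
    (hΛ₁ : ∀ t ∈ Icc a b, 0 ≤ Λ₁ t) (hΛ₂ : ∀ t ∈ Icc a b, 0 ≤ Λ₂ t)
    (ht₀ : ∃ t₀ ∈ Icc a b, 0 < Λ₁ t₀)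
    (heq : ∀ t ∈ Icc a b, ∀ᵐ w ∂μ,
      G (Λ₁ t * Real.exp (φ₁ w)) = G (Λ₂ t * Real.exp (φ₂ w))) :
    φ₁ =ᵐ[μ] φ₂ ∧ ∀ t ∈ Icc a b, Λ₁ t = Λ₂ t :=
  identifiability_of_phi_and_Lambda_general μ G hGinj φ₁ φ₂ hφ₂int hφ₁mean hφ₂mean a b Λ₁ Λ₂ hΛ₁ hΛ₂
    ht₀ heq
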